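/- Let i, j ∈ I with a_{ij} = −1 and l ∈ ℤ. Set F := (v^{1/2}E_{j,l+2}E_{i,l+2} − v^{−1/2}E_{i,l+2}E_{j,l+2})/(v − v^{−1}) and G := E_{j,l+1}K_{j,l}^{−1} in 𝒜. Then F · G = v · G · F. (This is the verification that σ_j preserves relation (SD5) in the delicate case r = l + 2.) -/

import Mathlib

/-!
Braid group action on the twisted semi-derived Hall algebra (Contu, arXiv:2410.18604).

We work with the algebra `𝒜 = 𝒮𝒟ℋ_tw(C^b(𝒫))` given by its presentation
(Proposition `prop_presenentation_semiderived_E_i` of the paper): generators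
`E_{i,m}`, `K_{i,m}`, `K_{i,m}⁻¹` (`i ∈ I`, `m ∈ ℤ`) over `F = ℚ(v^{1/2})`,
subject to the relations (SD0)–(SD5).
-/

noncomputable section

namespace SDHall

/-- The field `ℚ(v^{1/2})` of rational functions over `ℚ` in one indeterminate `v^{1/2}`. -/
abbrev F₀ : Type := RatFunc ℚ

/-- The indeterminate `v^{1/2}`. -/
def sq : F₀ := RatFunc.X

/-- `v := (v^{1/2})²`. -/
def v : F₀ := sq ^ 2

/-- The sign `(-1)^n` for an integer `n`. -/
def sgn (n : ℤ) : ℤ := (((-1 : ℤˣ) ^ n : ℤˣ) : ℤ)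

/-- Generators `E_{i,m}`, `K_{i,m}`, `K_{i,m}⁻¹` of the presented algebra. -/
inductive Gen (I : Type) : Type
  | E : I → ℤ → Gen I
  | K : I → ℤ → Gen I
  | Kinv : I → ℤ → Gen I

variable {I : Type}

def e (i : I) (m : ℤ) : FreeAlgebra F₀ (Gen I) := FreeAlgebra.ι F₀ (Gen.E i m)
def κ (i : I) (m : ℤ) : FreeAlgebra F₀ (Gen I) := FreeAlgebra.ι F₀ (Gen.K i m)
def κ' (i : I) (m : ℤ) : FreeAlgebra F₀ (Gen I) := FreeAlgebra.ι F₀ (Gen.Kinv i m)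

/-- The defining relations (SD0)–(SD5) of the twisted semi-derived Hall algebra:
(SD0) `K_{i,m}K_{i,m}⁻¹ = 1 = K_{i,m}⁻¹K_{i,m}`;
(SD1) each `K_{i,m}` is central;
(SD2) `E_{i,m}E_{j,m} = E_{j,m}E_{i,m}` if `a_{ij} = 0`;
(SD3) `E_{i,m}²E_{j,m} − (v+v⁻¹)E_{i,m}E_{j,m}E_{i,m} + E_{j,m}E_{i,m}² = 0` if `a_{ij} = −1`;
(SD4) `E_{i,m+1}E_{j,m} = v^{a_{ij}}E_{j,m}E_{i,m+1} + δ_{ij}(1−v²)K_{i,m}`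
      (split into the cases `i ≠ j` and `i = j`);
(SD5) `E_{j,r}E_{i,l} = v^{−(−1)^{r−l}a_{ij}}E_{i,l}E_{j,r}` for `r > l+1`. -/
inductive Rel (a : I → I → ℤ) : FreeAlgebra F₀ (Gen I) → FreeAlgebra F₀ (Gen I) → Prop
  | sd0a (i : I) (m : ℤ) : Rel a (κ i m * κ' i m) 1
  | sd0b (i : I) (m : ℤ) : Rel a (κ' i m * κ i m) 1
  | sd1 (i : I) (m : ℤ) (x : FreeAlgebra F₀ (Gen I)) : Rel a (κ i m * x) (x * κ i m)
  | sd2 (i j : I) (m : ℤ) : a i j = 0 → Rel a (e i m * e j m) (e j m * e i m)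
  | sd3 (i j : I) (m : ℤ) : a i j = -1 →
      Rel a (e i m ^ 2 * e j m - (v + v⁻¹) • (e i m * e j m * e i m) + e j m * e i m ^ 2) 0
  | sd4_ne (i j : I) (m : ℤ) : i ≠ j →
      Rel a (e i (m + 1) * e j m) ((v ^ (a i j)) • (e j m * e i (m + 1)))
  | sd4_eq (i : I) (m : ℤ) :
      Rel a (e i (m + 1) * e i m)
        ((v ^ (a i i)) • (e i m * e i (m + 1)) + ((1 : F₀) - v ^ 2) • κ i m)
  | sd5 (i j : I) (r l : ℤ) : r > l + 1 →
      Rel a (e j r * e i l) ((v ^ (-(sgn (r - l)) * a i j)) • (e i l * e j r))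

/-- The twisted semi-derived Hall algebra `𝒜`, presented by generators and relations. -/
abbrev A (a : I → I → ℤ) : Type := RingQuot (Rel a)

/-- The generator `E_{i,m}` of `𝒜`. -/
def E (a : I → I → ℤ) (i : I) (m : ℤ) : A a := RingQuot.mkAlgHom F₀ (Rel a) (e i m)

/-- The generator `K_{i,m}` of `𝒜`. -/
def K (a : I → I → ℤ) (i : I) (m : ℤ) : A a := RingQuot.mkAlgHom F₀ (Rel a) (κ i m)

/-- The generator `K_{i,m}⁻¹` of `𝒜`. -/
def Kinv (a : I → I → ℤ) (i : I) (m : ℤ) : A a := RingQuot.mkAlgHom F₀ (Rel a) (κ' i m)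

/-- `a` is a simply-laced generalized Cartan matrix: symmetric, `a_{ii} = 2`,
and `a_{ij} ∈ {0, −1}` for `i ≠ j`. -/
def IsCartan (a : I → I → ℤ) : Prop :=
  (∀ i j, a i j = a j i) ∧ (∀ i, a i i = 2) ∧ ∀ i j, i ≠ j → a i j = 0 ∨ a i j = -1

/-- The element `(v^{1/2}E_{i,m}E_{j,m} − v^{−1/2}E_{j,m}E_{i,m})/(v − v^{−1})` of `𝒜`. -/
def T (a : I → I → ℤ) (i j : I) (m : ℤ) : A a :=
  (v - v⁻¹)⁻¹ • (sq • (E a i m * E a j m) - sq⁻¹ • (E a j m * E a i m))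

/-- The defining formulas for the braid group operator `σᵢ` on the generators:
`σᵢ(E_{i,m}) = E_{i,m+1}K_{i,m}⁻¹`;
`σᵢ(E_{j,m}) = (v^{1/2}E_{i,m}E_{j,m} − v^{−1/2}E_{j,m}E_{i,m})/(v − v^{−1})` if `a_{ij} = −1`;
`σᵢ(E_{j,m}) = E_{j,m}` if `a_{ij} = 0`;
`σᵢ(K_{i,m}) = K_{i,m}⁻¹`; `σᵢ(K_{j,m}) = K_{i,m}K_{j,m}` if `a_{ij} = −1`;
`σᵢ(K_{j,m}) = K_{j,m}` if `a_{ij} = 0`. -/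
def SigmaSpec (a : I → I → ℤ) (i : I) (σ : A a →ₐ[F₀] A a) : Prop :=
  (∀ m : ℤ, σ (E a i m) = E a i (m + 1) * Kinv a i m) ∧
  (∀ (j : I) (m : ℤ), a i j = -1 → σ (E a j m) = T a i j m) ∧
  (∀ (j : I) (m : ℤ), a i j = 0 → σ (E a j m) = E a j m) ∧
  (∀ m : ℤ, σ (K a i m) = Kinv a i m) ∧
  (∀ (j : I) (m : ℤ), a i j = -1 → σ (K a j m) = K a i m * K a j m) ∧
  (∀ (j : I) (m : ℤ), a i j = 0 → σ (K a j m) = K a j m)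

/-- The defining formulas for the inverse operator `σᵢ'` on the generators:
`σᵢ'(E_{i,m}) = E_{i,m−1}K_{i,m−1}⁻¹`;
`σᵢ'(E_{j,m}) = (v^{1/2}E_{j,m}E_{i,m} − v^{−1/2}E_{i,m}E_{j,m})/(v − v^{−1})` if `a_{ij} = −1`;
`σᵢ'(E_{j,m}) = E_{j,m}` if `a_{ij} = 0`;
`σᵢ'(K_{i,m}) = K_{i,m}⁻¹`; `σᵢ'(K_{j,m}) = K_{i,m}K_{j,m}` if `a_{ij} = −1`;
`σᵢ'(K_{j,m}) = K_{j,m}` if `a_{ij} = 0`. -/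
def SigmaSpec' (a : I → I → ℤ) (i : I) (σ : A a →ₐ[F₀] A a) : Prop :=
  (∀ m : ℤ, σ (E a i m) = E a i (m - 1) * Kinv a i (m - 1)) ∧
  (∀ (j : I) (m : ℤ), a i j = -1 → σ (E a j m) = T a j i m) ∧
  (∀ (j : I) (m : ℤ), a i j = 0 → σ (E a j m) = E a j m) ∧
  (∀ m : ℤ, σ (K a i m) = Kinv a i m) ∧
  (∀ (j : I) (m : ℤ), a i j = -1 → σ (K a j m) = K a i m * K a j m) ∧
  (∀ (j : I) (m : ℤ), a i j = 0 → σ (K a j m) = K a j m)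

end SDHall

open SDHall

/-!
Write `B = E_{j,l+2}`, `C = E_{i,l+2}`, `D = E_{j,l+1}`. By (SD4), `B D = v² D B + (1 - v²) K_{j,l+1}`
and `C D = v⁻¹ D C`; pushing `D` to the left through `B C` and `C B` therefore produces `v D B C`
and `v D C B` up to multiples of `K_{j,l+1} C`. In `v^{1/2} B C D - v^{-1/2} C B D` these
correction terms carry the coefficients `v^{1/2} v⁻¹ (1 - v²)` and `v^{-1/2} (1 - v²)`, which agree,
so they cancel. Hence `F D = v D F`, and `K_{j,l}⁻¹` is central, being the inverse of a central unit.
-/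

namespace SDHall

variable {I : Type} {a : I → I → ℤ}

theorem sq_ne_zero : sq ≠ 0 := RatFunc.X_ne_zero

theorem v_ne_zero : v ≠ 0 := pow_ne_zero 2 sq_ne_zero

theorem sq_mul_v_inv : sq * v⁻¹ = sq⁻¹ := by
  rw [v]
  field_simp [sq_ne_zero]

theorem v_inv_mul_v_sq : v⁻¹ * v ^ 2 = v := by
  field_simp [v_ne_zero]

theorem commute_K (i : I) (m : ℤ) (x : A a) : Commute (K a i m) x := by
  obtain ⟨y, rfl⟩ := RingQuot.mkAlgHom_surjective F₀ (Rel a) x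
  simpa [Commute, SemiconjBy, K] using RingQuot.mkAlgHom_rel F₀ (Rel.sd1 (a := a) i m y)

theorem K_mul_Kinv (i : I) (m : ℤ) : K a i m * Kinv a i m = 1 := by
  simpa [K, Kinv] using RingQuot.mkAlgHom_rel F₀ (Rel.sd0a (a := a) i m)

theorem Kinv_mul_K (i : I) (m : ℤ) : Kinv a i m * K a i m = 1 := by
  simpa [K, Kinv] using RingQuot.mkAlgHom_rel F₀ (Rel.sd0b (a := a) i m)

theorem commute_Kinv (i : I) (m : ℤ) (x : A a) : Commute (Kinv a i m) x :=
  (commute_K i m x).units_inv_left (u := ⟨K a i m, Kinv a i m, K_mul_Kinv i m, Kinv_mul_K i m⟩)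

theorem E_succ_mul_E_self {j : I} (hjj : a j j = 2) (m : ℤ) :
    E a j (m + 1) * E a j m = v ^ 2 • (E a j m * E a j (m + 1)) + (1 - v ^ 2) • K a j m := by
  simpa [E, K, hjj] using RingQuot.mkAlgHom_rel F₀ (Rel.sd4_eq (a := a) j m)

theorem E_succ_mul_E_of_ne {i j : I} (hne : i ≠ j) (m : ℤ) :
    E a i (m + 1) * E a j m = v ^ a i j • (E a j m * E a i (m + 1)) := by
  simpa [E] using RingQuot.mkAlgHom_rel F₀ (Rel.sd4_ne (a := a) i j m hne)

theorem T_succ_mul_E {i j : I} (hjj : a j j = 2) (hij : a i j = -1) (hne : i ≠ j) (m : ℤ) :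
    T a j i (m + 1) * E a j m = v • (E a j m * T a j i (m + 1)) := by
  set B := E a j (m + 1)
  set C := E a i (m + 1)
  set D := E a j m
  have hBD : B * D = v ^ 2 • (D * B) + (1 - v ^ 2) • K a j m := E_succ_mul_E_self hjj m
  have hCD : C * D = v⁻¹ • (D * C) := by
    simpa [hij] using E_succ_mul_E_of_ne (a := a) hne m
  have hBCD : B * C * D = v • (D * (B * C)) + (v⁻¹ * (1 - v ^ 2)) • (K a j m * C) := by
    rw [mul_assoc, hCD, mul_smul_comm, ← mul_assoc, hBD, add_mul, smul_add, smul_mul_assoc,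
      smul_mul_assoc, smul_smul, smul_smul, mul_assoc, v_inv_mul_v_sq]
  have hCBD : C * B * D = v • (D * (C * B)) + (1 - v ^ 2) • (K a j m * C) := by
    rw [mul_assoc, hBD, mul_add, mul_smul_comm, mul_smul_comm, ← mul_assoc, hCD, smul_mul_assoc,
      smul_smul, mul_comm, v_inv_mul_v_sq, (commute_K j m C).eq, mul_assoc]
  calc T a j i (m + 1) * D
      = (v - v⁻¹)⁻¹ • (sq • (B * C * D) - sq⁻¹ • (C * B * D)) := by
        simp only [T, smul_mul_assoc, sub_mul]
        rfl
    _ = (v - v⁻¹)⁻¹ • (sq • v • (D * (B * C)) - sq⁻¹ • v • (D * (C * B))) := by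
        have hK : sq • (v⁻¹ * (1 - v ^ 2)) • (K a j m * C) = sq⁻¹ • (1 - v ^ 2) • (K a j m * C) := by
          rw [smul_smul, smul_smul, ← mul_assoc, sq_mul_v_inv]
        rw [hBCD, hCBD, smul_add, smul_add, hK, add_sub_add_right_eq_sub]
    _ = v • (D * T a j i (m + 1)) := by
        simp only [T, mul_smul_comm, mul_sub, smul_sub, smul_comm _ v]
        rfl

end SDHall

theorem sd5_preserved_r_eq_l_add_two_general (I : Type) (a : I → I → ℤ)
    (hA : IsCartan a) (i j : I) (hij : a i j = -1) (l : ℤ) :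
    T a j i (l + 2) * (E a j (l + 1) * Kinv a j l)
      = v • ((E a j (l + 1) * Kinv a j l) * T a j i (l + 2)) := by
  obtain ⟨-, hdiag, -⟩ := hA
  have hne : i ≠ j := by
    rintro rfl
    have := hdiag i
    omega
  have hTE : T a j i (l + 2) * E a j (l + 1) = v • (E a j (l + 1) * T a j i (l + 2)) := by
    simpa only [add_assoc, one_add_one_eq_two] using T_succ_mul_E (hdiag j) hij hne (l + 1)
  rw [← mul_assoc, hTE, smul_mul_assoc, mul_assoc, ← (commute_Kinv j l _).eq, mul_assoc]

/-- For `a_{ij} = −1` and `l ∈ ℤ`, set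
`F := (v^{1/2}E_{j,l+2}E_{i,l+2} − v^{−1/2}E_{i,l+2}E_{j,l+2})/(v − v^{−1})` and
`G := E_{j,l+1}K_{j,l}⁻¹`. Then `F·G = v·G·F` in `𝒜`.
(Verification that `σⱼ` preserves (SD5) in the delicate case `r = l + 2`.) -/
theorem sd5_preserved_r_eq_l_add_two (I : Type) [Fintype I] (a : I → I → ℤ)
    (hA : IsCartan a) (i j : I) (hij : a i j = -1) (l : ℤ) :
    T a j i (l + 2) * (E a j (l + 1) * Kinv a j l)
      = v • ((E a j (l + 1) * Kinv a j l) * T a j i (l + 2)) :=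
  sd5_preserved_r_eq_l_add_two_general I a hA i j hij l
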